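/- For an n×p matrix X, an integer 1 ≤ s ≤ p/2 and k₀ > 0, define K(s,k₀,X)⁻¹ as the minimum over all J₀ with |J₀| ≤ s and all nonzero v with ‖v_{J₀ᶜ}‖₁ ≤ k₀‖v_{J₀}‖₁ of ‖Xv‖₂/(√n ‖v_{J₀}‖₂), and define K(s,s,k₀,X)⁻¹ analogously with denominator √n ‖v_{J₀₁}‖₂, where J₀₁ = J₀ ∪ J₁ and J₁ indexes the s largest coordinates of v outside J₀. Then K(s,k₀,X) ≤ K(s,s,k₀,X) ≤ √2 · K(s,k₀,X). -/

import Mathlib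

open Finset

noncomputable def l1 {p : ℕ} (v : Fin p → ℝ) : ℝ := ∑ i, |v i|
noncomputable def l2 {p : ℕ} (v : Fin p → ℝ) : ℝ := Real.sqrt (∑ i, (v i) ^ 2)

def restr {p : ℕ} (T : Finset (Fin p)) (v : Fin p → ℝ) : Fin p → ℝ :=
  fun i => if i ∈ T then v i else 0

/-- The set of ratios ‖Xv‖₂/(√n ‖v_{J₀}‖₂) over admissible pairs (J₀, v). -/
def ratios1 (n p s : ℕ) (k0 : ℝ) (X : Matrix (Fin n) (Fin p) ℝ) : Set ℝ :=
  { r | ∃ (J0 : Finset (Fin p)) (v : Fin p → ℝ), J0.card ≤ s ∧ v ≠ 0 ∧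
      l1 (restr J0ᶜ v) ≤ k0 * l1 (restr J0 v) ∧
      r = l2 (X.mulVec v) / (Real.sqrt n * l2 (restr J0 v)) }

/-- K(s,k₀,X) := (inf of the ratios)⁻¹. -/
noncomputable def Kre (n p s : ℕ) (k0 : ℝ) (X : Matrix (Fin n) (Fin p) ℝ) : ℝ :=
  (sInf (ratios1 n p s k0 X))⁻¹

/-- Ratios ‖Xv‖₂/(√n ‖v_{J₀₁}‖₂), where J₀₁ = J₀ ∪ J₁ and J₁ indexes the
s largest coordinates of v outside J₀. -/
def ratios2 (n p s : ℕ) (k0 : ℝ) (X : Matrix (Fin n) (Fin p) ℝ) : Set ℝ :=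
  { r | ∃ (J0 J1 : Finset (Fin p)) (v : Fin p → ℝ), J0.card ≤ s ∧ v ≠ 0 ∧
      l1 (restr J0ᶜ v) ≤ k0 * l1 (restr J0 v) ∧
      J1.card = s ∧ Disjoint J1 J0 ∧
      (∀ i ∈ J1, ∀ j, j ∉ J0 → j ∉ J1 → |v j| ≤ |v i|) ∧
      r = l2 (X.mulVec v) / (Real.sqrt n * l2 (restr (J0 ∪ J1) v)) }

/-- K(s,s,k₀,X) := (inf of those ratios)⁻¹. -/
noncomputable def Kre2 (n p s : ℕ) (k0 : ℝ) (X : Matrix (Fin n) (Fin p) ℝ) : ℝ :=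
  (sInf (ratios2 n p s k0 X))⁻¹

/-! Enlarging `J₀` to `J₀ ∪ J₁` only enlarges the denominator, so every ratio of the first kind
dominates one of the second kind, whence `K(s,k₀,X) ≤ K(s,s,k₀,X)`. Conversely, for an admissible
`(J₀, J₁, v)` let `J` index the `s` largest coordinates of `|v|`. Then `J` dominates `J₀` in `ℓ₁`,
so `(J, v)` still satisfies the cone condition, and it dominates both `J₀` and `J₁` in `ℓ₂`, so
`‖v_{J₀ ∪ J₁}‖₂² ≤ 2 ‖v_J‖₂²`; this gives `K(s,s,k₀,X) ≤ √2 · K(s,k₀,X)`. -/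

namespace Finset

variable {α β : Type*} [DecidableEq α]

theorem exists_subset_card_eq_forall_le [LinearOrder β] (w : α → β) {S : Finset α} {s : ℕ}
    (hs : s ≤ #S) : ∃ J ⊆ S, #J = s ∧ ∀ i ∈ J, ∀ j ∈ S, j ∉ J → w j ≤ w i := by
  induction s generalizing S with
  | zero => exact ⟨∅, empty_subset S, card_empty, by simp⟩
  | succ s ih =>
    obtain ⟨i₀, hi₀, hmax⟩ := S.exists_max_image w (card_pos.mp (by omega))
    obtain ⟨J, hJS, hJcard, hJtop⟩ := ih (S := S.erase i₀) (by rw [card_erase_of_mem hi₀]; omega)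
    have hi₀J : i₀ ∉ J := fun h => (mem_erase.mp (hJS h)).1 rfl
    refine ⟨insert i₀ J, insert_subset hi₀ (hJS.trans (erase_subset _ _)),
      by rw [card_insert_of_notMem hi₀J, hJcard], ?_⟩
    intro i hi j hj hjJ
    rcases mem_insert.mp hi with rfl | hiJ
    · exact hmax j hj
    · exact hJtop i hiJ j (mem_erase.mpr ⟨fun h => hjJ (h ▸ mem_insert_self _ _), hj⟩)
        (fun h => hjJ (mem_insert_of_mem h))

theorem sum_le_sum_of_card_le_of_forall_notMem_le [AddCommMonoid β] [LinearOrder β]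
    [IsOrderedAddMonoid β] {u : α → β} (hu : ∀ i, 0 ≤ u i) {J T : Finset α} (hcard : #T ≤ #J)
    (htop : ∀ i ∈ J, ∀ j ∉ J, u j ≤ u i) : ∑ i ∈ T, u i ≤ ∑ i ∈ J, u i := by
  rw [← sum_inter_add_sum_sdiff T J, ← sum_inter_add_sum_sdiff J T, inter_comm J T]
  refine add_le_add_right ?_ _
  have hcard' : #(T \ J) ≤ #(J \ T) := by
    have := card_inter_add_card_sdiff T J
    have := card_inter_add_card_sdiff J T
    rw [inter_comm J T] at this
    omega
  rcases (J \ T).eq_empty_or_nonempty with h | h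
  · rw [sdiff_eq_empty_iff_subset.mpr (by simpa [h] using hcard'), sum_empty]
    exact sum_nonneg fun i _ => hu i
  obtain ⟨i₀, hi₀, hmin⟩ := (J \ T).exists_min_image u h
  calc ∑ i ∈ T \ J, u i ≤ #(T \ J) • u i₀ :=
        sum_le_card_nsmul _ _ _ fun j hj => htop i₀ (mem_sdiff.mp hi₀).1 j (mem_sdiff.mp hj).2
    _ ≤ #(J \ T) • u i₀ := nsmul_le_nsmul_left (hu i₀) hcard'
    _ ≤ ∑ i ∈ J \ T, u i := card_nsmul_le_sum _ _ _ hmin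

end Finset

section OrderedField

variable {K : Type*} [Field K] [LinearOrder K] [IsStrictOrderedRing K] {a b c t : K}

theorem div_le_mul_div_of_le_mul (ha : 0 ≤ a) (hc : 0 < c) (ht : 0 < t)
    (h : c ≤ t * b) : a / b ≤ t * (a / c) :=
  calc a / b ≤ a / (c / t) := div_le_div_of_nonneg_left ha (div_pos hc ht) ((div_le_iff₀' ht).2 h)
    _ = t * (a / c) := by field_simp

theorem inv_le_mul_inv_of_le_mul (ha : 0 < a) (hb : 0 < b) (h : a ≤ t * b) :
    b⁻¹ ≤ t * a⁻¹ := by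
  rw [← div_eq_mul_inv, le_div_iff₀ ha, inv_mul_le_iff₀ hb, mul_comm]
  exact h

end OrderedField

section Restriction

variable {p : ℕ} {v : Fin p → ℝ} {k0 : ℝ} {T U : Finset (Fin p)}

theorem l2_nonneg (v : Fin p → ℝ) : 0 ≤ l2 v := Real.sqrt_nonneg _

theorem l1_restr (T : Finset (Fin p)) (v : Fin p → ℝ) : l1 (restr T v) = ∑ i ∈ T, |v i| := by
  simp [l1, restr, apply_ite abs, sum_ite_mem]

theorem l2_restr (T : Finset (Fin p)) (v : Fin p → ℝ) :
    l2 (restr T v) = Real.sqrt (∑ i ∈ T, v i ^ 2) := by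
  simp [l2, restr, apply_ite (· ^ 2), sum_ite_mem]

theorem l1_restr_add_l1_restr_compl (T : Finset (Fin p)) (v : Fin p → ℝ) :
    l1 (restr T v) + l1 (restr Tᶜ v) = l1 v := by
  rw [l1_restr, l1_restr, sum_add_sum_compl, l1]

theorem l2_restr_mono (h : T ⊆ U) : l2 (restr T v) ≤ l2 (restr U v) := by
  rw [l2_restr, l2_restr]
  exact Real.sqrt_le_sqrt (sum_le_sum_of_subset_of_nonneg h fun i _ _ => sq_nonneg (v i))

theorem l2_restr_pos_of_cone (hv : v ≠ 0) (hcone : l1 (restr Tᶜ v) ≤ k0 * l1 (restr T v)) :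
    0 < l2 (restr T v) := by
  rw [l2_restr, Real.sqrt_pos]
  contrapose! hv
  have hT : ∀ i ∈ T, v i = 0 := fun i hi => pow_eq_zero_iff two_ne_zero |>.mp <|
    (sum_eq_zero_iff_of_nonneg fun i _ => sq_nonneg (v i)).mp
      (hv.antisymm (sum_nonneg fun i _ => sq_nonneg (v i))) i hi
  rw [l1_restr, l1_restr, sum_eq_zero (s := T) fun i hi => by rw [hT i hi, abs_zero], mul_zero] at hcone
  have hTc : ∀ i ∈ Tᶜ, v i = 0 := fun i hi => abs_eq_zero.mp <|
    (sum_eq_zero_iff_of_nonneg fun i _ => abs_nonneg (v i)).mp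
      (hcone.antisymm (sum_nonneg fun i _ => abs_nonneg (v i))) i hi
  funext i
  by_cases hi : i ∈ T
  exacts [hT i hi, hTc i (mem_compl.mpr hi)]

theorem cone_of_l1_restr_le (hk0 : 0 ≤ k0) (hle : l1 (restr T v) ≤ l1 (restr U v))
    (hcone : l1 (restr Tᶜ v) ≤ k0 * l1 (restr T v)) :
    l1 (restr Uᶜ v) ≤ k0 * l1 (restr U v) := by
  have := l1_restr_add_l1_restr_compl T v
  have := l1_restr_add_l1_restr_compl U v
  have := mul_le_mul_of_nonneg_left hle hk0
  linarith

theorem l2_restr_union_le_sqrt_two_mul {J T₀ T₁ : Finset (Fin p)} (hdisj : Disjoint T₀ T₁)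
    (h₀ : #T₀ ≤ #J) (h₁ : #T₁ ≤ #J) (htop : ∀ i ∈ J, ∀ j ∉ J, |v j| ≤ |v i|) :
    l2 (restr (T₀ ∪ T₁) v) ≤ Real.sqrt 2 * l2 (restr J v) := by
  rw [l2_restr, l2_restr, ← Real.sqrt_mul zero_le_two]
  refine Real.sqrt_le_sqrt ?_
  have htop' : ∀ i ∈ J, ∀ j ∉ J, v j ^ 2 ≤ v i ^ 2 := fun i hi j hj => sq_le_sq.mpr (htop i hi j hj)
  rw [sum_union hdisj, two_mul]
  exact add_le_add (sum_le_sum_of_card_le_of_forall_notMem_le (fun i => sq_nonneg (v i)) h₀ htop')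
    (sum_le_sum_of_card_le_of_forall_notMem_le (fun i => sq_nonneg (v i)) h₁ htop')

end Restriction

section Ratios

variable {n p s : ℕ} {k0 : ℝ} {X : Matrix (Fin n) (Fin p) ℝ}

theorem bddBelow_ratios1 : BddBelow (ratios1 n p s k0 X) := by
  refine ⟨0, ?_⟩
  rintro _ ⟨J0, v, -, -, -, rfl⟩
  exact div_nonneg (l2_nonneg _) (mul_nonneg (Real.sqrt_nonneg _) (l2_nonneg _))

theorem bddBelow_ratios2 : BddBelow (ratios2 n p s k0 X) := by
  refine ⟨0, ?_⟩
  rintro _ ⟨J0, J1, v, -, -, -, -, -, -, rfl⟩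
  exact div_nonneg (l2_nonneg _) (mul_nonneg (Real.sqrt_nonneg _) (l2_nonneg _))

theorem exists_mem_ratios2_le (hn : 1 ≤ n) (hsp : 2 * s ≤ p) {r : ℝ}
    (hr : r ∈ ratios1 n p s k0 X) : ∃ r' ∈ ratios2 n p s k0 X, r' ≤ r := by
  obtain ⟨J0, v, hJ0, hv, hcone, rfl⟩ := hr
  obtain ⟨J1, hJ1, hJ1card, hJ1top⟩ := exists_subset_card_eq_forall_le (fun j => |v j|)
    (S := J0ᶜ) (s := s) (by rw [card_compl, Fintype.card_fin]; omega)
  refine ⟨_, ⟨J0, J1, v, hJ0, hv, hcone, hJ1card,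
    disjoint_left.mpr fun i hi => mem_compl.mp (hJ1 hi),
    fun i hi j hj0 hj1 => hJ1top i hi j (mem_compl.mpr hj0) hj1, rfl⟩, ?_⟩
  have hn' : 0 < Real.sqrt n := Real.sqrt_pos.mpr (by exact_mod_cast hn)
  exact div_le_div_of_nonneg_left (l2_nonneg _) (mul_pos hn' (l2_restr_pos_of_cone hv hcone))
    (mul_le_mul_of_nonneg_left (l2_restr_mono subset_union_left) hn'.le)

theorem exists_mem_ratios1_le_sqrt_two_mul (hn : 1 ≤ n) (hsp : 2 * s ≤ p) (hk0 : 0 < k0)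
    {r' : ℝ} (hr' : r' ∈ ratios2 n p s k0 X) :
    ∃ r ∈ ratios1 n p s k0 X, r ≤ Real.sqrt 2 * r' := by
  obtain ⟨J0, J1, v, hJ0, hv, hcone, hJ1card, hdisj, -, rfl⟩ := hr'
  obtain ⟨J, -, hJcard, hJtop⟩ := exists_subset_card_eq_forall_le (fun j => |v j|)
    (S := univ) (s := s) (by rw [card_univ, Fintype.card_fin]; omega)
  have hJtop' : ∀ i ∈ J, ∀ j ∉ J, |v j| ≤ |v i| := fun i hi j hj => hJtop i hi j (mem_univ j) hj
  have hconeJ : l1 (restr Jᶜ v) ≤ k0 * l1 (restr J v) := by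
    refine cone_of_l1_restr_le hk0.le ?_ hcone
    rw [l1_restr, l1_restr]
    exact sum_le_sum_of_card_le_of_forall_notMem_le (fun i => abs_nonneg (v i)) (hJcard ▸ hJ0)
      hJtop'
  refine ⟨_, ⟨J, v, hJcard.le, hv, hconeJ, rfl⟩, ?_⟩
  have hn' : 0 < Real.sqrt n := Real.sqrt_pos.mpr (by exact_mod_cast hn)
  refine div_le_mul_div_of_le_mul (l2_nonneg _) (mul_pos hn' ?_) (by positivity) ?_
  · exact (l2_restr_pos_of_cone hv hcone).trans_le (l2_restr_mono subset_union_left)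
  · rw [mul_left_comm]
    exact mul_le_mul_of_nonneg_left (l2_restr_union_le_sqrt_two_mul hdisj.symm (hJcard ▸ hJ0)
      (hJcard ▸ hJ1card).le hJtop') hn'.le

end Ratios

theorem stmt4_general (n p s : ℕ) (k0 : ℝ) (hn : 1 ≤ n) (hsp : 2 * s ≤ p)
    (hk0 : 0 < k0) (X : Matrix (Fin n) (Fin p) ℝ)
    (hRE : 0 < sInf (ratios1 n p s k0 X)) :
    Kre n p s k0 X ≤ Kre2 n p s k0 X ∧
      Kre2 n p s k0 X ≤ Real.sqrt 2 * Kre n p s k0 X := by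
  have hne1 : (ratios1 n p s k0 X).Nonempty :=
    Set.nonempty_iff_ne_empty.mpr fun h => by simp [h] at hRE
  have hne2 : (ratios2 n p s k0 X).Nonempty := by
    obtain ⟨r, hr⟩ := hne1
    obtain ⟨r', hr', -⟩ := exists_mem_ratios2_le hn hsp hr
    exact ⟨r', hr'⟩
  have hBA : sInf (ratios2 n p s k0 X) ≤ sInf (ratios1 n p s k0 X) :=
    le_csInf hne1 fun r hr =>
      let ⟨r', hr', hle⟩ := exists_mem_ratios2_le hn hsp hr
      (csInf_le bddBelow_ratios2 hr').trans hle
  have hAB : sInf (ratios1 n p s k0 X) ≤ Real.sqrt 2 * sInf (ratios2 n p s k0 X) := by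
    rw [← div_le_iff₀' (by positivity)]
    refine le_csInf hne2 fun r' hr' => ?_
    obtain ⟨r, hr, hle⟩ := exists_mem_ratios1_le_sqrt_two_mul hn hsp hk0 hr'
    exact (div_le_iff₀' (by positivity)).mpr ((csInf_le bddBelow_ratios1 hr).trans hle)
  have hB : 0 < sInf (ratios2 n p s k0 X) := pos_of_mul_pos_right (hRE.trans_le hAB) (by positivity)
  exact ⟨inv_anti₀ hB hBA, inv_le_mul_inv_of_le_mul hRE hB hAB⟩

/-- K(s,k₀,X) ≤ K(s,s,k₀,X) ≤ √2 · K(s,k₀,X). -/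
theorem stmt4 (n p s : ℕ) (k0 : ℝ) (hn : 1 ≤ n) (hs : 1 ≤ s) (hsp : 2 * s ≤ p)
    (hk0 : 0 < k0) (X : Matrix (Fin n) (Fin p) ℝ)
    (hRE : 0 < sInf (ratios1 n p s k0 X)) :
    Kre n p s k0 X ≤ Kre2 n p s k0 X ∧
      Kre2 n p s k0 X ≤ Real.sqrt 2 * Kre n p s k0 X :=
  stmt4_general n p s k0 hn hsp hk0 X hRE
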